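/- Let A be the (n+1)-dimensional n-ary algebra of type (C_1) over a field F with δ ≠ 1. Let w = (δ/(1-δ))·Σ_{k=1}^{n-1} β_{kk}. Then the linear map φ defined by φ(e_i) = Σ_{j=1}^{n+1} β_{ij} e_j for i < n, φ(e_n) = w·e_n + β_{n,n+1}·e_{n+1}, φ(e_{n+1}) = (δ/α)·β_{n,n+1}·e_n + w·e_{n+1}, where β_{n,n+1} = 0 unless δ = -1, is a δ-derivation of A. -/

import Mathlib

/-!
Both sides of the identity are alternating `n`-linear in `x`: on the right, if `x i = x j` the
terms where `φ` hits slot `i` or slot `j` differ by a transposition and all other terms vanish.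
An alternating map is determined by its values on the `n + 1` tuples `e_1, …, ê_m, …, e_{n+1}`,
so it suffices to check those. Putting `φ e_k` into such a tuple only sees the coefficient of
`e_k` and that of the omitted `e_m`, and the bracket kills every tuple omitting one of
`e_1, …, e_{n-1}`. For `m < n` both sides vanish; for `m ∈ {n, n+1}` the diagonal coefficients
give `w = δ (Σ β_kk + w)`, which is the formula for `w`, and the off-diagonal ones `γ`, `δγ/α`
give `γ = δ²γ`, which holds since `γ = 0` unless `δ = -1`.
-/

open Function

namespace Fin

theorem exists_forall_ne {n : ℕ} (v : Fin n → Fin (n + 1)) : ∃ m, ∀ i, v i ≠ m := by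
  by_contra! h
  simpa using Fintype.card_le_of_surjective v h

theorem exists_perm_eq_succAbove_comp {n : ℕ} {v : Fin n → Fin (n + 1)} (hv : Injective v)
    {m : Fin (n + 1)} (hm : ∀ i, v i ≠ m) :
    ∃ σ : Equiv.Perm (Fin n), v = m.succAbove ∘ σ := by
  choose σ hσ using fun i => exists_succAbove_eq (hm i)
  have hσinj : Injective σ := fun a c h => hv (by rw [← hσ a, ← hσ c, h])
  exact ⟨Equiv.ofBijective σ hσinj.bijective_of_finite, funext fun i => (hσ i).symm⟩

theorem update_succAbove_castSucc_self {n : ℕ} (j : Fin n) :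
    update (succAbove j.castSucc) j j.castSucc = succAbove j.succ := by
  funext a
  rcases lt_trichotomy a j with h | rfl | h
  · rw [update_of_ne h.ne, succAbove_castSucc_of_lt _ _ h, succAbove_succ_of_le _ _ h.le]
  · simp
  · rw [update_of_ne h.ne', succAbove_castSucc_of_le _ _ h.le, succAbove_succ_of_lt _ _ h]

theorem update_succAbove_succ_self {n : ℕ} (j : Fin n) :
    update (succAbove j.succ) j j.succ = succAbove j.castSucc := by
  funext a
  rcases lt_trichotomy a j with h | rfl | h
  · rw [update_of_ne h.ne, succAbove_castSucc_of_lt _ _ h, succAbove_succ_of_le _ _ h.le]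
  · simp
  · rw [update_of_ne h.ne', succAbove_castSucc_of_le _ _ h.le, succAbove_succ_of_lt _ _ h]

theorem update_succAbove_ne {n : ℕ} (m : Fin (n + 1)) (i a : Fin n) :
    update m.succAbove i m a ≠ m.succAbove i := by
  rcases eq_or_ne a i with rfl | ha
  · simp
  · simp [ha]

theorem sum_filter_val_lt {M : Type*} [AddCommMonoid M] {k : ℕ} (g : Fin (k + 2) → M) :
    ∑ j ∈ Finset.univ.filter (fun j : Fin (k + 2) => (j : ℕ) < k), g j =
      ∑ i : Fin k, g i.castSucc.castSucc := by
  simp [Finset.sum_filter, Fin.sum_univ_castSucc]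

end Fin

theorem LinearMap.update_id_apply {R M ι : Type*} [Semiring R] [AddCommMonoid M] [Module R M]
    [DecidableEq ι] (φ : M →ₗ[R] M) (x : ι → M) (k : ι) :
    (fun l => update (fun _ => LinearMap.id) k φ l (x l)) = update x k (φ (x k)) :=
  funext fun l => by rcases eq_or_ne l k with rfl | hl <;> simp [*]

namespace AlternatingMap

variable {R M N : Type*} [CommRing R] [AddCommGroup M] [Module R M] [AddCommGroup N] [Module R N]

section Leibniz

variable {ι : Type*} [DecidableEq ι]

variable [Fintype ι]

def leibnizSum (f : M [⋀^ι]→ₗ[R] N) (φ : M →ₗ[R] M) : M [⋀^ι]→ₗ[R] N where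
  toMultilinearMap := ∑ i, f.toMultilinearMap.compLinearMap (update (fun _ => LinearMap.id) i φ)
  map_eq_zero_of_eq' x i j hx hij := by
    change (∑ k, f.toMultilinearMap.compLinearMap _) x = 0
    simp only [sum_apply, MultilinearMap.compLinearMap_apply, LinearMap.update_id_apply,
      coe_multilinearMap]
    rw [Fintype.sum_eq_add i j hij fun k hk =>
      f.map_eq_zero_of_eq _ (by simpa [hk.1.symm, hk.2.symm] using hx) hij]
    have hswap : update x j (φ (x j)) = update x i (φ (x i)) ∘ Equiv.swap i j := by
      rw [update_comp_equiv, Equiv.symm_swap, Equiv.swap_apply_left, hx]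
      congr 1
      funext a
      rcases eq_or_ne a i with rfl | hai
      · simp [hx]
      rcases eq_or_ne a j with rfl | haj
      · simp [hx]
      · simp [Equiv.swap_apply_of_ne_of_ne hai haj]
    rw [hswap, f.map_swap _ hij, add_neg_cancel]

@[simp]
theorem leibnizSum_apply (f : M [⋀^ι]→ₗ[R] N) (φ : M →ₗ[R] M) (x : ι → M) :
    f.leibnizSum φ x = ∑ i, f (update x i (φ (x i))) := by
  change (∑ k, f.toMultilinearMap.compLinearMap _) x = _
  simp only [sum_apply, MultilinearMap.compLinearMap_apply, LinearMap.update_id_apply,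
    coe_multilinearMap]

end Leibniz

section BasisSuccAbove

variable {n : ℕ} (b : Module.Basis (Fin (n + 1)) R M)

theorem ext_basis_succAbove {f g : M [⋀^Fin n]→ₗ[R] N}
    (h : ∀ m : Fin (n + 1), f (b ∘ m.succAbove) = g (b ∘ m.succAbove)) : f = g := by
  refine b.ext_alternating fun v hv => ?_
  obtain ⟨m, hm⟩ := Fin.exists_forall_ne v
  obtain ⟨σ, rfl⟩ := Fin.exists_perm_eq_succAbove_comp hv hm
  change f ((b ∘ m.succAbove) ∘ σ) = g ((b ∘ m.succAbove) ∘ σ)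
  rw [f.map_perm, g.map_perm, h]

theorem map_basis_comp_eq_zero (f : M [⋀^Fin n]→ₗ[R] N) {v : Fin n → Fin (n + 1)}
    {m : Fin (n + 1)} (hv : ∀ i, v i ≠ m) (hm : f (b ∘ m.succAbove) = 0) :
    f (b ∘ v) = 0 := by
  by_cases hinj : Injective v
  · obtain ⟨σ, rfl⟩ := Fin.exists_perm_eq_succAbove_comp hinj hv
    change f ((b ∘ m.succAbove) ∘ σ) = 0
    rw [f.map_perm, hm, smul_zero]
  · exact f.map_eq_zero_of_not_injective _ fun h => hinj (h.of_comp)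

theorem map_update_basis_succAbove (f : M [⋀^Fin n]→ₗ[R] N) (m : Fin (n + 1)) (i : Fin n)
    (x : M) :
    f (update (b ∘ m.succAbove) i x) =
      b.repr x (m.succAbove i) • f (b ∘ m.succAbove) +
        b.repr x m • f (b ∘ update m.succAbove i m) := by
  -- any other basis vector already occurs in the tuple
  conv_lhs => rw [← b.sum_repr x]
  simp only [f.map_update_sum, f.map_update_smul, ← comp_update]
  rw [Fintype.sum_eq_add (m.succAbove i) m (Fin.succAbove_ne m i), update_eq_self]
  rintro j ⟨hj, hjm⟩
  obtain ⟨a, rfl⟩ := Fin.exists_succAbove_eq hjm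
  have hai : a ≠ i := fun h => hj (h ▸ rfl)
  rw [f.map_eq_zero_of_eq _ (i := i) (j := a) (by simp [hai]) hai.symm, smul_zero]

theorem map_basis_update_succAbove_eq_zero (f : M [⋀^Fin n]→ₗ[R] N) (m : Fin (n + 1))
    (i : Fin n) (h : f (b ∘ (m.succAbove i).succAbove) = 0) :
    f (b ∘ update m.succAbove i m) = 0 :=
  f.map_basis_comp_eq_zero b (Fin.update_succAbove_ne m i) h

end BasisSuccAbove

end AlternatingMap

section C1

variable {F A : Type*} [Field F] [AddCommGroup A] [Module F A]

/-- `b i` is the paper's `e_{i+1}`, and `b ∘ i.succAbove` lists the basis without `b i`. -/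
def IsC1Bracket {n : ℕ} (b : Module.Basis (Fin (n + 1)) F A) (α : F)
    (br : A [⋀^Fin n]→ₗ[F] A) : Prop :=
  ∀ i : Fin (n + 1), br (b ∘ i.succAbove) =
    if (i : ℕ) = n - 1 then b i else if (i : ℕ) = n then α • b i else 0

noncomputable def c1Map {n : ℕ} (b : Module.Basis (Fin (n + 1)) F A) (α δ : F)
    (β : Fin (n + 1) → Fin (n + 1) → F) (γ w : F) : A →ₗ[F] A :=
  b.constr F fun i =>
    if (i : ℕ) < n - 1 then ∑ j, β i j • b j
    else if (i : ℕ) = n - 1 then w • b i + γ • b (Fin.last n)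
    else (δ / α * γ) • b ⟨n - 1, by omega⟩ + w • b i

/- With `n = k + 1`, the vectors `b i.castSucc.castSucc` are `e_1, …, e_{n-1}`, while
`b (Fin.last k).castSucc` is `e_n` and `b (Fin.last k).succ` is `e_{n+1}`. -/
variable {k : ℕ} {b : Module.Basis (Fin (k + 2)) F A} {α : F}
  {br : A [⋀^Fin (k + 1)]→ₗ[F] A}

namespace IsC1Bracket

theorem apply_castSucc_castSucc (hbr : IsC1Bracket b α br) (i : Fin k) :
    br (b ∘ i.castSucc.castSucc.succAbove) = 0 := by
  rw [hbr, if_neg (by simp; omega), if_neg (by simp; omega)]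

theorem apply_castSucc_last (hbr : IsC1Bracket b α br) :
    br (b ∘ (Fin.last k).castSucc.succAbove) = b (Fin.last k).castSucc := by
  rw [hbr, if_pos (by simp)]

theorem apply_succ_last (hbr : IsC1Bracket b α br) :
    br (b ∘ (Fin.last k).succ.succAbove) = α • b (Fin.last k).succ := by
  rw [hbr, if_neg (by simp), if_pos (by simp)]

end IsC1Bracket

variable (b α) {δ : F} {β : Fin (k + 2) → Fin (k + 2) → F} {γ w : F}

theorem c1Map_apply_castSucc_castSucc (i : Fin k) :
    c1Map b α δ β γ w (b i.castSucc.castSucc) = ∑ j, β i.castSucc.castSucc j • b j := by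
  rw [c1Map, Module.Basis.constr_basis, if_pos (by simp)]

theorem c1Map_apply_castSucc_last :
    c1Map b α δ β γ w (b (Fin.last k).castSucc) =
      w • b (Fin.last k).castSucc + γ • b (Fin.last k).succ := by
  rw [c1Map, Module.Basis.constr_basis, if_neg (by simp), if_pos (by simp), Fin.succ_last]

theorem c1Map_apply_succ_last :
    c1Map b α δ β γ w (b (Fin.last k).succ) =
      (δ / α * γ) • b (Fin.last k).castSucc + w • b (Fin.last k).succ := by
  rw [c1Map, Module.Basis.constr_basis, if_neg (by simp), if_neg (by simp)]
  rfl

variable {b α}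

theorem c1Map_update_castSucc_castSucc (hbr : IsC1Bracket b α br) (m : Fin (k + 2)) (i : Fin k)
    (hi : m.succAbove i.castSucc = i.castSucc.castSucc) :
    br (update (b ∘ m.succAbove) i.castSucc (c1Map b α δ β γ w (b i.castSucc.castSucc))) =
      β i.castSucc.castSucc i.castSucc.castSucc • br (b ∘ m.succAbove) := by
  have hzero := hbr.apply_castSucc_castSucc i
  rw [← hi] at hzero
  rw [br.map_update_basis_succAbove, br.map_basis_update_succAbove_eq_zero _ _ _ hzero,
    c1Map_apply_castSucc_castSucc, b.repr_sum_self, hi, smul_zero, add_zero]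

theorem c1Map_leibniz_castSucc_castSucc (hbr : IsC1Bracket b α br) (j : Fin k) :
    c1Map b α δ β γ w (br (b ∘ j.castSucc.castSucc.succAbove)) =
      δ • br.leibnizSum (c1Map b α δ β γ w) (b ∘ j.castSucc.castSucc.succAbove) := by
  rw [hbr.apply_castSucc_castSucc, map_zero, AlternatingMap.leibnizSum_apply,
    Finset.sum_eq_zero, smul_zero]
  intro i _
  rw [br.map_update_basis_succAbove, hbr.apply_castSucc_castSucc, smul_zero, zero_add, comp_apply]
  rcases (j.castSucc.castSucc.succAbove i).eq_castSucc_or_eq_last with ⟨t, ht⟩ | ht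
  · rcases t.eq_castSucc_or_eq_last with ⟨t, rfl⟩ | rfl
    · have hzero := hbr.apply_castSucc_castSucc t
      rw [← ht] at hzero
      rw [br.map_basis_update_succAbove_eq_zero _ _ _ hzero, smul_zero]
    · rw [ht, c1Map_apply_castSucc_last]
      simp
  · rw [ht, ← Fin.succ_last, c1Map_apply_succ_last]
    simp

theorem c1Map_leibniz_castSucc_last (hbr : IsC1Bracket b α br) (hα : α ≠ 0)
    (hw : w = δ * (∑ i : Fin k, β i.castSucc.castSucc i.castSucc.castSucc + w))
    (hγ : γ = δ * (δ * γ)) :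
    c1Map b α δ β γ w (br (b ∘ (Fin.last k).castSucc.succAbove)) =
      δ • br.leibnizSum (c1Map b α δ β γ w) (b ∘ (Fin.last k).castSucc.succAbove) := by
  rw [hbr.apply_castSucc_last, c1Map_apply_castSucc_last, AlternatingMap.leibnizSum_apply,
    Fin.sum_univ_castSucc]
  simp only [comp_apply, Fin.succAbove_castSucc_of_lt _ _ (Fin.castSucc_lt_last _),
    Fin.succAbove_castSucc_self]
  rw [Finset.sum_congr rfl fun i _ => c1Map_update_castSucc_castSucc hbr _ i
    (Fin.succAbove_castSucc_of_lt _ _ (Fin.castSucc_lt_last i))]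
  rw [br.map_update_basis_succAbove, Fin.succAbove_castSucc_self,
    Fin.update_succAbove_castSucc_self, hbr.apply_castSucc_last, hbr.apply_succ_last,
    c1Map_apply_succ_last]
  have hpq : (Fin.last k).castSucc ≠ (Fin.last k).succ := Fin.castSucc_lt_succ.ne
  simp only [map_add, map_smul, b.repr_self, Finsupp.add_apply, Finsupp.smul_apply,
    Finsupp.single_eq_same, Finsupp.single_eq_of_ne hpq, Finsupp.single_eq_of_ne hpq.symm,
    smul_eq_mul, mul_one, mul_zero, add_zero, zero_add, ← Finset.sum_smul]
  have hγ' : δ * (δ / α * γ * α) = γ := by field_simp; linear_combination -hγ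
  linear_combination (norm := module) hw • b (Fin.last k).castSucc - hγ' • b (Fin.last k).succ

theorem c1Map_leibniz_succ_last (hbr : IsC1Bracket b α br) (hα : α ≠ 0)
    (hw : w = δ * (∑ i : Fin k, β i.castSucc.castSucc i.castSucc.castSucc + w)) :
    c1Map b α δ β γ w (br (b ∘ (Fin.last k).succ.succAbove)) =
      δ • br.leibnizSum (c1Map b α δ β γ w) (b ∘ (Fin.last k).succ.succAbove) := by
  rw [hbr.apply_succ_last, map_smul, c1Map_apply_succ_last, AlternatingMap.leibnizSum_apply,
    Fin.sum_univ_castSucc]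
  simp only [comp_apply, Fin.succAbove_succ_of_le _ _ (Fin.le_last _)]
  rw [Finset.sum_congr rfl fun i _ => c1Map_update_castSucc_castSucc hbr _ i
    (Fin.succAbove_succ_of_le _ _ (Fin.le_last _))]
  rw [br.map_update_basis_succAbove, Fin.succAbove_succ_self, Fin.update_succAbove_succ_self,
    hbr.apply_castSucc_last, hbr.apply_succ_last, c1Map_apply_castSucc_last]
  have hpq : (Fin.last k).castSucc ≠ (Fin.last k).succ := Fin.castSucc_lt_succ.ne
  simp only [map_add, map_smul, b.repr_self, Finsupp.add_apply, Finsupp.smul_apply,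
    Finsupp.single_eq_same, Finsupp.single_eq_of_ne hpq, Finsupp.single_eq_of_ne hpq.symm,
    smul_eq_mul, mul_one, mul_zero, add_zero, zero_add, ← Finset.sum_smul]
  have hε : α * (δ / α * γ) = δ * γ := by field_simp
  linear_combination (norm := module)
    hε • b (Fin.last k).castSucc + (α * hw) • b (Fin.last k).succ

theorem c1Map_compAlternatingMap (hbr : IsC1Bracket b α br) (hα : α ≠ 0)
    (hw : w = δ * (∑ i : Fin k, β i.castSucc.castSucc i.castSucc.castSucc + w))
    (hγ : γ = δ * (δ * γ)) :
    (c1Map b α δ β γ w).compAlternatingMap br =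
      δ • br.leibnizSum (c1Map b α δ β γ w) := by
  refine AlternatingMap.ext_basis_succAbove b fun m => ?_
  rw [LinearMap.compAlternatingMap_apply, AlternatingMap.smul_apply]
  rcases m.eq_castSucc_or_eq_last with ⟨m, rfl⟩ | rfl
  · rcases m.eq_castSucc_or_eq_last with ⟨m, rfl⟩ | rfl
    · exact c1Map_leibniz_castSucc_castSucc hbr m
    · exact c1Map_leibniz_castSucc_last hbr hα hw hγ
  · rw [← Fin.succ_last]
    exact c1Map_leibniz_succ_last hbr hα hw

end C1

/-- Type `(C_1)`: with `w = (δ/(1-δ))·Σ_{k=1}^{n-1} β_{kk}`, the map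
`φ(e_i) = Σ_j β_{ij} e_j` (`i < n`), `φ(e_n) = w e_n + γ e_{n+1}`,
`φ(e_{n+1}) = (δ/α) γ e_n + w e_{n+1}` (with `γ = 0` unless `δ = -1`)
is a `δ`-derivation. -/
theorem C1_map_is_delta_derivation
    {F A : Type*} [Field F] [AddCommGroup A] [Module F A] {n : ℕ} (hn : 2 ≤ n)
    (b : Module.Basis (Fin (n + 1)) F A)
    (α : F) (hα : α ≠ 0)
    (br : AlternatingMap F A A (Fin n))
    (hbr : ∀ i : Fin (n + 1),
      br (b ∘ i.succAbove) =
        if (i : ℕ) = n - 1 then b i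
        else if (i : ℕ) = n then α • b i
        else 0)
    (δ : F) (hδ1 : δ ≠ 1)
    (β : Fin (n + 1) → Fin (n + 1) → F) (γ : F)
    (hγ : δ ≠ -1 → γ = 0)
    (w : F)
    (hw : w = δ / (1 - δ) *
      ∑ k ∈ Finset.univ.filter (fun k : Fin (n + 1) => (k : ℕ) < n - 1), β k k)
    (φ : A →ₗ[F] A)
    (hφ : φ = b.constr F (fun i : Fin (n + 1) =>
      if (i : ℕ) < n - 1 then ∑ j, β i j • b j
      else if (i : ℕ) = n - 1 then w • b i + γ • b (Fin.last n)
      else (δ / α * γ) • b ⟨n - 1, by omega⟩ + w • b i)) :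
    ∀ x : Fin n → A,
      φ (br x) = δ • ∑ i, br (Function.update x i (φ (x i))) := by
  obtain ⟨k, rfl⟩ : ∃ k, n = k + 1 := ⟨n - 1, by omega⟩
  obtain rfl : φ = c1Map b α δ β γ w := hφ
  have hw' : w = δ * (∑ i : Fin k, β i.castSucc.castSucc i.castSucc.castSucc + w) := by
    rw [Nat.add_sub_cancel, Fin.sum_filter_val_lt] at hw
    rw [hw]
    field_simp [sub_ne_zero.mpr hδ1.symm]
    ring
  have hγ' : γ = δ * (δ * γ) := by
    rcases eq_or_ne δ (-1) with rfl | hδ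
    · ring
    · simp [hγ hδ]
  intro x
  simpa using DFunLike.congr_fun (c1Map_compAlternatingMap hbr hα hw' hγ') x
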